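/- Let p₃, p₄ be real polynomials in one variable, let M, N : ℝ³ → ℝ be continuous, and set φ(x) = ln(p₃(x)/p₄(x)) for p₃(x)/p₄(x) > 0. Let I : ℝ³ → ℝ be differentiable such that for all (x, y) with p₃(x)/p₄(x) > 0, writing u = φ(x): p₃(x)·p₄(x)·N(x,y,u)·∂I/∂x(x,y,u) + p₃(x)·p₄(x)·M(x,y,u)·∂I/∂y(x,y,u) + N(x,y,u)·(p₃'(x)·p₄(x) − p₃(x)·p₄'(x))·∂I/∂z(x,y,u) = 0. If J ⊆ ℝ is an interval and y : J → ℝ is differentiable with p₃(x)/p₄(x) > 0, p₃(x)·p₄(x) ≠ 0, N(x, y(x), φ(x)) ≠ 0 and y'(x) = M(x, y(x), φ(x))/N(x, y(x), φ(x)) for all x ∈ J, then x ↦ I(x, y(x), ln(p₃(x)/p₄(x))) is constant on J. -/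

import Mathlib

/-!
Along a solution `y` of the ODE, `F x = I (x, y x, log (p₃ x / p₄ x))` has derivative
`pdX I + (M / N) pdY I + ((p₃' p₄ - p₃ p₄') / (p₃ p₄)) pdZ I` by the chain rule, which is the
left-hand side of the first-integral equation divided by `p₃ p₄ N`, hence zero. A function with
zero derivative on an interval is constant.
-/

/-- Partial derivative in the `x` direction of a function on `ℝ³`. -/
noncomputable def pdX (F : ℝ × ℝ × ℝ → ℝ) (p : ℝ × ℝ × ℝ) : ℝ :=
  fderiv ℝ F p (1, 0, 0)

/-- Partial derivative in the `y` direction. -/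
noncomputable def pdY (F : ℝ × ℝ × ℝ → ℝ) (p : ℝ × ℝ × ℝ) : ℝ :=
  fderiv ℝ F p (0, 1, 0)

/-- Partial derivative in the `z` direction. -/
noncomputable def pdZ (F : ℝ × ℝ × ℝ → ℝ) (p : ℝ × ℝ × ℝ) : ℝ :=
  fderiv ℝ F p (0, 0, 1)

theorem Convex.is_const_of_hasDerivWithinAt_eq_zero {E : Type*} [NormedAddCommGroup E]
    [NormedSpace ℝ E] {s : Set ℝ} (hs : Convex ℝ s) {f : ℝ → E}
    (hf : ∀ x ∈ s, HasDerivWithinAt f 0 s x) {a b : ℝ} (ha : a ∈ s) (hb : b ∈ s) :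
    f a = f b := by
  have hle := hs.norm_image_sub_le_of_norm_hasDerivWithin_le hf (C := 0) (by simp) hb ha
  rwa [zero_mul, norm_le_zero_iff, sub_eq_zero] at hle

theorem fderiv_apply_eq_pdX_add_pdY_add_pdZ (I : ℝ × ℝ × ℝ → ℝ) (p : ℝ × ℝ × ℝ)
    (a b c : ℝ) :
    fderiv ℝ I p (a, b, c) = a * pdX I p + b * pdY I p + c * pdZ I p := by
  have hsplit : ((a, b, c) : ℝ × ℝ × ℝ) = a • (1, 0, 0) + b • (0, 1, 0) + c • (0, 0, 1) := by
    simp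
  rw [hsplit, map_add, map_add, map_smul, map_smul, map_smul]
  rfl

theorem DifferentiableAt.hasDerivAt_comp_graph {I : ℝ × ℝ × ℝ → ℝ} {y u : ℝ → ℝ} {y' u' x : ℝ}
    (hI : DifferentiableAt ℝ I (x, y x, u x)) (hy : HasDerivAt y y' x)
    (hu : HasDerivAt u u' x) :
    HasDerivAt (fun t => I (t, y t, u t))
      (pdX I (x, y x, u x) + y' * pdY I (x, y x, u x) + u' * pdZ I (x, y x, u x)) x := by
  have hcurve := hI.hasFDerivAt.comp_hasDerivAt x ((hasDerivAt_id x).prodMk (hy.prodMk hu))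
  rwa [Function.comp_def, fderiv_apply_eq_pdX_add_pdY_add_pdZ, one_mul] at hcurve

theorem Polynomial.hasDerivAt_log_eval_div_eval {p q : Polynomial ℝ} {x : ℝ}
    (hpq : p.eval x * q.eval x ≠ 0) :
    HasDerivAt (fun t => Real.log (p.eval t / q.eval t))
      (((derivative p).eval x * q.eval x - p.eval x * (derivative q).eval x)
        / (p.eval x * q.eval x)) x := by
  obtain ⟨hp, hq⟩ := mul_ne_zero_iff.mp hpq
  have hdiv : HasDerivAt (fun t => p.eval t / q.eval t)
      (((derivative p).eval x * q.eval x - p.eval x * (derivative q).eval x) / q.eval x ^ 2) x :=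
    (p.hasDerivAt x).div (q.hasDerivAt x) hq
  refine (hdiv.log (div_ne_zero hp hq)).congr_deriv ?_
  field_simp

theorem invariant_of_1ode_with_log_of_rational_general
    (p₃ p₄ : Polynomial ℝ)
    (M N : ℝ × ℝ × ℝ → ℝ)
    (I : ℝ × ℝ × ℝ → ℝ) (hI : Differentiable ℝ I)
    (hpde : ∀ x y : ℝ, 0 < p₃.eval x / p₄.eval x →
      ∀ u : ℝ, u = Real.log (p₃.eval x / p₄.eval x) →
        p₃.eval x * p₄.eval x * N (x, y, u) * pdX I (x, y, u)
          + p₃.eval x * p₄.eval x * M (x, y, u) * pdY I (x, y, u)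
          + N (x, y, u)
              * ((Polynomial.derivative p₃).eval x * p₄.eval x
                  - p₃.eval x * (Polynomial.derivative p₄).eval x)
              * pdZ I (x, y, u) = 0)
    (J : Set ℝ) (hJ : J.OrdConnected) (y : ℝ → ℝ)
    (hpos : ∀ x ∈ J, 0 < p₃.eval x / p₄.eval x)
    (hne : ∀ x ∈ J, p₃.eval x * p₄.eval x ≠ 0)
    (hNne : ∀ x ∈ J, N (x, y x, Real.log (p₃.eval x / p₄.eval x)) ≠ 0)
    (hy : ∀ x ∈ J,
      HasDerivAt y
        (M (x, y x, Real.log (p₃.eval x / p₄.eval x))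
          / N (x, y x, Real.log (p₃.eval x / p₄.eval x))) x) :
    ∀ a ∈ J, ∀ b ∈ J,
      I (a, y a, Real.log (p₃.eval a / p₄.eval a))
        = I (b, y b, Real.log (p₃.eval b / p₄.eval b)) := by
  have hderiv : ∀ x ∈ J,
      HasDerivAt (fun t => I (t, y t, Real.log (p₃.eval t / p₄.eval t))) 0 x := by
    intro x hx
    convert (hI _).hasDerivAt_comp_graph (hy x hx)
      (Polynomial.hasDerivAt_log_eval_div_eval (hne x hx)) using 1
    obtain ⟨hp₃, hp₄⟩ := mul_ne_zero_iff.mp (hne x hx)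
    field_simp [hNne x hx]
    linear_combination -hpde x (y x) (hpos x hx) _ rfl
  intro a ha b hb
  exact hJ.convex.is_const_of_hasDerivWithinAt_eq_zero
    (fun x hx => (hderiv x hx).hasDerivWithinAt) ha hb

/-- A first integral of the polynomial 3D system (with numerator and denominator
redefined by the factor `p₃·p₄`) associated with the 1ODE
`dy/dx = M(x, y, u)/N(x, y, u)` presenting `u = ln(p₃(x)/p₄(x))`
is constant along solutions of the 1ODE. -/
theorem invariant_of_1ode_with_log_of_rational
    (p₃ p₄ : Polynomial ℝ)
    (M N : ℝ × ℝ × ℝ → ℝ) (hM : Continuous M) (hN : Continuous N)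
    (I : ℝ × ℝ × ℝ → ℝ) (hI : Differentiable ℝ I)
    (hpde : ∀ x y : ℝ, 0 < p₃.eval x / p₄.eval x →
      ∀ u : ℝ, u = Real.log (p₃.eval x / p₄.eval x) →
        p₃.eval x * p₄.eval x * N (x, y, u) * pdX I (x, y, u)
          + p₃.eval x * p₄.eval x * M (x, y, u) * pdY I (x, y, u)
          + N (x, y, u)
              * ((Polynomial.derivative p₃).eval x * p₄.eval x
                  - p₃.eval x * (Polynomial.derivative p₄).eval x)
              * pdZ I (x, y, u) = 0)
    (J : Set ℝ) (hJ : J.OrdConnected) (y : ℝ → ℝ)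
    (hpos : ∀ x ∈ J, 0 < p₃.eval x / p₄.eval x)
    (hne : ∀ x ∈ J, p₃.eval x * p₄.eval x ≠ 0)
    (hNne : ∀ x ∈ J, N (x, y x, Real.log (p₃.eval x / p₄.eval x)) ≠ 0)
    (hy : ∀ x ∈ J,
      HasDerivAt y
        (M (x, y x, Real.log (p₃.eval x / p₄.eval x))
          / N (x, y x, Real.log (p₃.eval x / p₄.eval x))) x) :
    ∀ a ∈ J, ∀ b ∈ J,
      I (a, y a, Real.log (p₃.eval a / p₄.eval a))
        = I (b, y b, Real.log (p₃.eval b / p₄.eval b)) :=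
  invariant_of_1ode_with_log_of_rational_general p₃ p₄ M N I hI hpde J hJ y hpos hne hNne hy
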